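/- arXiv:2104.03905 — 2 statements merged into one kernel-verified Lean document; each statement's English description precedes it below -/
import Mathlib

section
/- Let m ≥ 3 be an odd integer. Then the spectrum of the Farey graph G3(2m) equals, as a multiset, the product multiset sp3(2)·sp3(m) = {λ·μ : λ ∈ sp3(2), μ ∈ sp3(m)} counted with multiplicity, where sp3(2) = {2, −1, −1}. -/
/-!
The Chinese remainder theorem splits `ℤ/2mℤ` as `ℤ/2ℤ × ℤ/mℤ`. Since `-1 = 1` in `ℤ/2ℤ`, the
identification `(a,c) ~ (-a,-c)` only acts on the `ℤ/mℤ` factor, so the vertices of `G3(2m)` are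
pairs of vertices of `G3(2)` and `G3(m)`; and `ad - bc ≡ ±1 (mod 2m)` holds exactly when it holds
modulo `2` and modulo `m`. Hence `G3(2m)` is the tensor product of `G3(2)` and `G3(m)`: its
adjacency matrix is, up to relabelling, the Kronecker product of theirs. Diagonalising both
symmetric factors by orthogonal matrices diagonalises the Kronecker product, whose eigenvalues are
therefore the pairwise products.
-/

/-- The equivalence relation identifying `(a,c)` with `(-a,-c)` on the set of pairs of
elements of `ℤ/nℤ` generating the unit ideal. -/
def FareySetoid (n : ℕ) : Setoid {p : ZMod n × ZMod n // IsCoprime p.1 p.2} where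
  r p q := p.1 = q.1 ∨ p.1 = -q.1
  iseqv := by
    constructor
    · intro p; exact Or.inl rfl
    · rintro p q (h | h)
      · exact Or.inl h.symm
      · right; rw [h, neg_neg]
    · rintro p q s (h1 | h1) (h2 | h2)
      · exact Or.inl (h1.trans h2)
      · right; rw [h1, h2]
      · right; rw [h1, h2]
      · left; rw [h1, h2, neg_neg]

/-- The vertices of the Farey graph `G3(n)`: classes `[a:c]` of pairs `(a,c) ∈ (ℤ/nℤ)²`
generating the unit ideal, with `(a,c) ~ (-a,-c)`. -/
def FareyVertex (n : ℕ) := Quotient (FareySetoid n)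

/-- The vertex `[a:c]` of the Farey graph. -/
def FareyVertex.mk (n : ℕ) (a c : ZMod n) (h : IsCoprime a c) : FareyVertex n :=
  Quotient.mk (FareySetoid n) ⟨(a, c), h⟩

/-- The Farey graph `G3(n)`: vertices `[a:c]` and `[b:d]` are adjacent iff
`ad - bc ≡ ±1 (mod n)`. -/
def FareyGraph (n : ℕ) : SimpleGraph (FareyVertex n) where
  Adj u v := u ≠ v ∧ ∃ a c b d : ZMod n,
    (∃ h, u = FareyVertex.mk n a c h) ∧ (∃ h, v = FareyVertex.mk n b d h) ∧
    (a * d - b * c = 1 ∨ a * d - b * c = -1)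
  symm := by
    constructor
    rintro u v ⟨hne, a, c, b, d, hu, hv, h⟩
    refine ⟨hne.symm, b, d, a, c, hv, hu, ?_⟩
    rcases h with h | h
    · right; linear_combination -h
    · left; linear_combination -h
  loopless := ⟨fun u h => h.1 rfl⟩

instance (n : ℕ) [NeZero n] : Finite (FareyVertex n) := Quotient.finite _

/-- A pair of integers `b, d` with `gcd(b, d, n) = 1` yields a pair generating the unit
ideal of `ℤ/nℤ`. -/
lemma isCoprime_zmod_of_gcd {n : ℕ} {b d : ℤ} (h : Int.gcd b (Int.gcd d n) = 1) :
    IsCoprime (b : ZMod n) (d : ZMod n) := by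
  obtain ⟨u, v, huv⟩ := Int.isCoprime_iff_gcd_eq_one.mpr h
  have hgcd : ((Int.gcd d n : ℕ) : ℤ) = d * Int.gcdA d n + n * Int.gcdB d n :=
    Int.gcd_eq_gcd_ab d (n : ℤ)
  refine ⟨(u : ZMod n), ((v * Int.gcdA d (n : ℤ) : ℤ) : ZMod n), ?_⟩
  have huv' : u * b + (v * Int.gcdA d (n : ℤ)) * d + (v * Int.gcdB d (n : ℤ)) * n = 1 := by
    rw [← huv, hgcd]; ring
  have := congrArg (fun z : ℤ => (z : ZMod n)) huv'
  push_cast at this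
  rw [ZMod.natCast_self] at this
  push_cast
  linear_combination this
/-- The vertex `[b:d]` of `G3(n)` determined by integers `b`, `d` with `gcd(b,d,n) = 1`. -/
def FareyVertex.ofInt (n : ℕ) (b d : ℤ) (h : Int.gcd b (Int.gcd d n) = 1) : FareyVertex n :=
  FareyVertex.mk n (b : ZMod n) (d : ZMod n) (isCoprime_zmod_of_gcd h)

/-- The number of vertices of the Farey graph `G3(n)`. -/
noncomputable def fareyCard (n : ℕ) : ℕ := Nat.card (FareyVertex n)

/-- The characteristic polynomial of the (real) adjacency matrix of the Farey
graph `G3(n)` (junk value `1` for `n = 0`). -/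
noncomputable def fareyCharpoly (n : ℕ) : Polynomial ℝ :=
  if h : n = 0 then 1
  else
    letI : NeZero n := ⟨h⟩
    letI : Fintype (FareyVertex n) := Fintype.ofFinite _
    letI : DecidableEq (FareyVertex n) := Classical.decEq _
    letI : DecidableRel (FareyGraph n).Adj := Classical.decRel _
    Matrix.charpoly ((FareyGraph n).adjMatrix ℝ)

/-- The spectrum of the Farey graph `G3(n)`: the multiset of real roots, with
multiplicity, of the characteristic polynomial of its adjacency matrix. -/
noncomputable def sp3 (n : ℕ) : Multiset ℝ := (fareyCharpoly n).roots

open Polynomial Matrix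
open scoped Kronecker

namespace Matrix

variable {R : Type*} [CommRing R] {m n : Type*} [Fintype m] [DecidableEq m] [Fintype n]
  [DecidableEq n]

lemma charpoly_mul_mul_of_mul_eq_one {P Q : Matrix n n R} (hQP : Q * P = 1) (M : Matrix n n R) :
    (P * M * Q).charpoly = M.charpoly := by
  rw [charpoly_mul_comm, ← Matrix.mul_assoc, hQP, Matrix.one_mul]

variable {𝕜 : Type*} [RCLike 𝕜]

lemma IsHermitian.charpoly_kronecker {A : Matrix m m 𝕜} {B : Matrix n n 𝕜} (hA : A.IsHermitian)
    (hB : B.IsHermitian) :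
    (A ⊗ₖ B).charpoly = ∏ p : m × n, (X - C ((hA.eigenvalues p.1 : 𝕜) * hB.eigenvalues p.2)) := by
  set U : Matrix m m 𝕜 := hA.eigenvectorUnitary.val
  set V : Matrix n n 𝕜 := hB.eigenvectorUnitary.val
  have hAB : A ⊗ₖ B = (U ⊗ₖ V) *
      (diagonal (RCLike.ofReal ∘ hA.eigenvalues) ⊗ₖ diagonal (RCLike.ofReal ∘ hB.eigenvalues)) *
      star (U ⊗ₖ V) := by
    conv_lhs => rw [hA.spectral_theorem, hB.spectral_theorem]
    simp only [Unitary.conjStarAlgAut_apply, mul_kronecker_mul, star_eq_conjTranspose,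
      conjTranspose_kronecker, U, V]
  have hUV : star (U ⊗ₖ V) * (U ⊗ₖ V) = 1 :=
    (kronecker_mem_unitary hA.eigenvectorUnitary.2 hB.eigenvectorUnitary.2).1
  rw [hAB, charpoly_mul_mul_of_mul_eq_one hUV, diagonal_kronecker_diagonal, charpoly_diagonal]
  simp

lemma IsHermitian.roots_charpoly_kronecker {A : Matrix m m 𝕜} {B : Matrix n n 𝕜}
    (hA : A.IsHermitian) (hB : B.IsHermitian) :
    (A ⊗ₖ B).charpoly.roots = A.charpoly.roots.bind fun a ↦ B.charpoly.roots.map (a * ·) := by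
  rw [hA.charpoly_kronecker hB, hA.roots_charpoly_eq_eigenvalues,
    hB.roots_charpoly_eq_eigenvalues, roots_prod _ _ (Finset.prod_ne_zero_iff.mpr
      fun _ _ ↦ X_sub_C_ne_zero _)]
  simp only [roots_X_sub_C, Multiset.bind_singleton, ← Finset.univ_product_univ,
    Finset.product_val]
  simp only [SProd.sprod, Multiset.product, Multiset.map_bind, Multiset.bind_map, Multiset.map_map,
    Function.comp_def]

end Matrix

lemma SimpleGraph.reindex_adjMatrix_eq_kronecker {U V W α : Type*} [MulZeroOneClass α]
    {G : SimpleGraph U} {H₁ : SimpleGraph V} {H₂ : SimpleGraph W} [DecidableRel G.Adj]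
    [DecidableRel H₁.Adj] [DecidableRel H₂.Adj] (e : U ≃ V × W)
    (he : ∀ u v, G.Adj u v ↔ H₁.Adj (e u).1 (e v).1 ∧ H₂.Adj (e u).2 (e v).2) :
    reindex e e (G.adjMatrix α) = H₁.adjMatrix α ⊗ₖ H₂.adjMatrix α := by
  ext ⟨u₁, u₂⟩ ⟨v₁, v₂⟩
  simp only [reindex_apply, submatrix_apply, kroneckerMap_apply, adjMatrix_apply, he,
    Equiv.apply_symm_apply, ite_zero_mul_ite_zero, mul_one]

lemma Prod.isCoprime_iff {R S : Type*} [CommSemiring R] [CommSemiring S] {x y : R × S} :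
    IsCoprime x y ↔ IsCoprime x.1 y.1 ∧ IsCoprime x.2 y.2 := by
  refine ⟨fun h ↦ ⟨h.map (RingHom.fst R S), h.map (RingHom.snd R S)⟩, ?_⟩
  rintro ⟨⟨u, v, huv⟩, ⟨u', v', huv'⟩⟩
  exact ⟨(u, u'), (v, v'), Prod.ext huv huv'⟩

lemma Prod.eq_or_eq_neg_iff {S T : Type*} [Neg S] [Neg T] (hS : ∀ s : S, -s = s) {x y : S × T} :
    (x = y ∨ x = -y) ↔ (x.1 = y.1 ∨ x.1 = -y.1) ∧ (x.2 = y.2 ∨ x.2 = -y.2) := by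
  simp only [Prod.ext_iff, Prod.fst_neg, Prod.snd_neg, hS]
  tauto

lemma RingEquiv.isCoprime_iff_prod {R S T : Type*} [CommSemiring R] [CommSemiring S]
    [CommSemiring T] (e : R ≃+* S × T) {a c : R} :
    IsCoprime a c ↔ IsCoprime (e a).1 (e c).1 ∧ IsCoprime (e a).2 (e c).2 := by
  refine ⟨fun h ↦ Prod.isCoprime_iff.mp (h.map (e : R →+* S × T)), fun h ↦ ?_⟩
  simpa using (Prod.isCoprime_iff.mpr h).map (e.symm : S × T →+* R)

namespace ZMod

variable {m : ℕ} (hc : Nat.Coprime 2 m)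

lemma eq_one_or_eq_neg_one_iff_chineseRemainder (x : ZMod (2 * m)) :
    (x = 1 ∨ x = -1) ↔ ((chineseRemainder hc x).1 = 1 ∨ (chineseRemainder hc x).1 = -1) ∧
      ((chineseRemainder hc x).2 = 1 ∨ (chineseRemainder hc x).2 = -1) := by
  have := Prod.eq_or_eq_neg_iff neg_eq_self_mod_two (x := chineseRemainder hc x) (y := 1)
  rwa [Prod.fst_one, Prod.snd_one, ← map_one (chineseRemainder hc), ← map_neg,
    EmbeddingLike.apply_eq_iff_eq, EmbeddingLike.apply_eq_iff_eq] at this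

noncomputable def chineseRemainderPairs :
    ZMod (2 * m) × ZMod (2 * m) ≃+* (ZMod 2 × ZMod 2) × (ZMod m × ZMod m) :=
  ((chineseRemainder hc).prodCongr (chineseRemainder hc)).trans
    (RingEquiv.prodProdProdComm _ _ _ _)

end ZMod

namespace FareyVertex

@[elab_as_elim]
lemma ind {n : ℕ} {motive : FareyVertex n → Prop}
    (mk : ∀ a c (h : IsCoprime a c), motive (FareyVertex.mk n a c h)) (u : FareyVertex n) :
    motive u :=
  Quotient.ind (fun p ↦ mk _ _ p.2) u

lemma mk_eq_mk_iff {n : ℕ} {a c b d : ZMod n} {h : IsCoprime a c} {h' : IsCoprime b d} :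
    mk n a c h = mk n b d h' ↔ (a, c) = (b, d) ∨ (a, c) = -(b, d) :=
  Quotient.eq

/-- The condition `u ≠ v` in `FareyGraph` is automatic: two representatives of one class have
determinant `0 ≠ ±1`. -/
lemma adj_mk_iff {n : ℕ} [Nontrivial (ZMod n)] {a c b d : ZMod n} {h : IsCoprime a c}
    {h' : IsCoprime b d} :
    (FareyGraph n).Adj (mk n a c h) (mk n b d h') ↔ a * d - b * c = 1 ∨ a * d - b * c = -1 := by
  constructor
  · rintro ⟨-, a', c', b', d', ⟨_, hu⟩, ⟨_, hv⟩, hdet⟩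
    rw [mk_eq_mk_iff] at hu hv
    rcases hu with hu | hu <;> rcases hv with hv | hv <;>
      simp only [Prod.ext_iff, Prod.neg_mk] at hu hv <;>
      obtain ⟨rfl, rfl⟩ := hu <;> obtain ⟨rfl, rfl⟩ := hv <;> grind
  · intro hdet
    refine ⟨fun heq ↦ ?_, a, c, b, d, ⟨h, rfl⟩, ⟨h', rfl⟩, hdet⟩
    have hzero : a * d - b * c = 0 := by
      rcases mk_eq_mk_iff.mp heq with hu | hu <;>
        simp only [Prod.ext_iff, Prod.neg_mk] at hu <;> obtain ⟨rfl, rfl⟩ := hu <;> ring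
    rw [hzero] at hdet
    rcases hdet with h0 | h0
    · exact zero_ne_one h0
    · exact zero_ne_one (neg_eq_zero.mp h0.symm).symm

variable {m : ℕ} (hc : Nat.Coprime 2 m)

noncomputable def coprimePairsEquiv : {p : ZMod (2 * m) × ZMod (2 * m) // IsCoprime p.1 p.2} ≃
    {p : ZMod 2 × ZMod 2 // IsCoprime p.1 p.2} × {p : ZMod m × ZMod m // IsCoprime p.1 p.2} :=
  ((ZMod.chineseRemainderPairs hc).toEquiv.subtypeEquiv fun _ ↦
    (ZMod.chineseRemainder hc).isCoprime_iff_prod).trans Equiv.subtypeProdEquivProd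

noncomputable def chineseRemainderEquiv : FareyVertex (2 * m) ≃ FareyVertex 2 × FareyVertex m :=
  (Quotient.congr (coprimePairsEquiv hc) fun p q ↦ by
    change p.1 = q.1 ∨ p.1 = -q.1 ↔ _
    rw [← (ZMod.chineseRemainderPairs hc).injective.eq_iff,
      ← (ZMod.chineseRemainderPairs hc).injective.eq_iff, map_neg,
      Prod.eq_or_eq_neg_iff fun s ↦ Prod.ext (ZMod.neg_eq_self_mod_two _)
        (ZMod.neg_eq_self_mod_two _)]
    rfl).trans (Setoid.prodQuotientEquiv _ _).symm

lemma chineseRemainderEquiv_mk (a c : ZMod (2 * m)) (h : IsCoprime a c) :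
    chineseRemainderEquiv hc (mk _ a c h) =
      (mk 2 _ _ ((ZMod.chineseRemainder hc).isCoprime_iff_prod.mp h).1,
        mk m _ _ ((ZMod.chineseRemainder hc).isCoprime_iff_prod.mp h).2) :=
  rfl

lemma adj_iff_chineseRemainderEquiv [Nontrivial (ZMod m)] (u v : FareyVertex (2 * m)) :
    (FareyGraph (2 * m)).Adj u v ↔
      (FareyGraph 2).Adj (chineseRemainderEquiv hc u).1 (chineseRemainderEquiv hc v).1 ∧
        (FareyGraph m).Adj (chineseRemainderEquiv hc u).2 (chineseRemainderEquiv hc v).2 := by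
  have : Nontrivial (ZMod (2 * m)) := (ZMod.chineseRemainder hc).toEquiv.nontrivial
  induction u using FareyVertex.ind with | mk a c h =>
  induction v using FareyVertex.ind with | mk b d h' =>
  simpa only [chineseRemainderEquiv_mk, adj_mk_iff, map_sub, map_mul, Prod.fst_sub, Prod.snd_sub,
    Prod.fst_mul, Prod.snd_mul] using
    ZMod.eq_one_or_eq_neg_one_iff_chineseRemainder hc (a * d - b * c)

end FareyVertex

lemma sp3_eq_roots_charpoly_adjMatrix (n : ℕ) [NeZero n] [Fintype (FareyVertex n)]
    [DecidableEq (FareyVertex n)] [DecidableRel (FareyGraph n).Adj] :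
    sp3 n = ((FareyGraph n).adjMatrix ℝ).charpoly.roots := by
  rw [sp3, fareyCharpoly, dif_neg (NeZero.ne n)]
  congr!

/-- For odd `m ≥ 3`, the spectrum of `G3(2m)` is the product multiset
`sp3(2)·sp3(m) = {λ·μ : λ ∈ sp3(2), μ ∈ sp3(m)}` counted with multiplicity. -/
theorem stmt12 (m : ℕ) (hm : 3 ≤ m) (hodd : Odd m) :
    sp3 (2 * m) = (sp3 2).bind (fun lam => (sp3 m).map (fun mu => lam * mu)) := by
  have hc : Nat.Coprime 2 m := Nat.coprime_two_left.mpr hodd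
  have : Fact (1 < m) := ⟨by omega⟩
  have : NeZero (2 * m) := ⟨by omega⟩
  classical
  let (n : ℕ) [NeZero n] : Fintype (FareyVertex n) := Fintype.ofFinite _
  rw [sp3_eq_roots_charpoly_adjMatrix, sp3_eq_roots_charpoly_adjMatrix,
    sp3_eq_roots_charpoly_adjMatrix,
    ← charpoly_reindex (FareyVertex.chineseRemainderEquiv hc),
    SimpleGraph.reindex_adjMatrix_eq_kronecker _ (FareyVertex.adj_iff_chineseRemainderEquiv hc),
    IsHermitian.roots_charpoly_kronecker (SimpleGraph.isHermitian_adjMatrix _ _)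
      (SimpleGraph.isHermitian_adjMatrix _ _)]
end

section
/- For every odd integer n ≥ 3, the multiset of eigenvalues (with multiplicity) of the adjacency matrix of the Hecke graph G4(n) equals the multiset union of sp3(n) and −sp3(n) = {−λ : λ ∈ sp3(n)}. The same holds for G6(n) for every integer n ≥ 2 not divisible by 3. -/
open Sum in
/-- The Hecke graph of level `n` with parameter `t` (the graphs `G4(n)` and `G6(n)` are
obtained for `t = 2` and `t = 3` respectively): the vertex set consists of two disjoint
copies of the vertices of `G3(n)` (even vertices `inl [a:c]` and odd vertices
`inr [b:d]`); an even vertex `[a:c]` and an odd vertex `[b:d]` are adjacent iff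
`ad - t·bc ≡ ±1 (mod n)`, and no two vertices of the same parity are adjacent. -/
def HeckeGraph (n : ℕ) (t : ℤ) : SimpleGraph (FareyVertex n ⊕ FareyVertex n) where
  Adj u v :=
    (∃ a c b d : ZMod n,
      (∃ h, u = inl (FareyVertex.mk n a c h)) ∧ (∃ h, v = inr (FareyVertex.mk n b d h)) ∧
      (a * d - (t : ZMod n) * (b * c) = 1 ∨ a * d - (t : ZMod n) * (b * c) = -1)) ∨
    (∃ a c b d : ZMod n,
      (∃ h, v = inl (FareyVertex.mk n a c h)) ∧ (∃ h, u = inr (FareyVertex.mk n b d h)) ∧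
      (a * d - (t : ZMod n) * (b * c) = 1 ∨ a * d - (t : ZMod n) * (b * c) = -1))
  symm := by
    constructor
    rintro u v (h | h)
    · exact Or.inr h
    · exact Or.inl h
  loopless := by
    constructor
    rintro u (⟨a, c, b, d, ⟨h₁, hu⟩, ⟨h₂, hv⟩, -⟩ | ⟨a, c, b, d, ⟨h₁, hv⟩, ⟨h₂, hu⟩, -⟩) <;>
      rw [hu] at hv
    · exact inl_ne_inr hv
    · exact inr_ne_inl hv

/-- The characteristic polynomial of the (real) adjacency matrix of the Hecke graph of
level `n` with parameter `t` (junk value `1` for `n = 0`). -/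
noncomputable def heckeCharpoly (n : ℕ) (t : ℤ) : Polynomial ℝ :=
  if h : n = 0 then 1
  else
    letI : NeZero n := ⟨h⟩
    letI : Fintype (FareyVertex n) := Fintype.ofFinite _
    letI : DecidableEq (FareyVertex n ⊕ FareyVertex n) := Classical.decEq _
    letI : DecidableRel (HeckeGraph n t).Adj := Classical.decRel _
    Matrix.charpoly ((HeckeGraph n t).adjMatrix ℝ)

/-- The spectrum of the Hecke graph of level `n` with parameter `t`: the multiset of real
roots, with multiplicity, of the characteristic polynomial of its adjacency matrix. -/
noncomputable def spHecke (n : ℕ) (t : ℤ) : Multiset ℝ := (heckeCharpoly n t).roots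

namespace Matrix

open Polynomial

variable {R : Type*} [CommRing R] {m : Type*} [Fintype m] [DecidableEq m]

theorem det_fromBlocks_swap (P Q : Matrix m m R) :
    (fromBlocks P Q Q P).det = (P + Q).det * (P - Q).det := by
  have h : fromBlocks 1 0 (-1) 1 * fromBlocks P Q Q P * fromBlocks 1 0 1 1 =
      fromBlocks (P + Q) Q 0 (P - Q) := by
    simp only [fromBlocks_multiply]
    congr 1 <;> noncomm_ring
  simpa [det_fromBlocks_zero₁₂, det_fromBlocks_zero₂₁] using congrArg det h

theorem charpoly_fromBlocks_zero_self (A : Matrix m m R) :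
    (fromBlocks 0 A A 0).charpoly = A.charpoly * (-A).charpoly := by
  rw [charpoly, charmatrix_fromBlocks, det_fromBlocks_swap, charpoly, charpoly]
  congr 2 <;> ext i j : 1 <;> simp [charmatrix, sub_eq_add_neg]

theorem charpoly_neg (A : Matrix m m R) :
    (-A).charpoly = (-1) ^ Fintype.card m * A.charpoly.comp (-X) := by
  have h : (charmatrix A).map (compRingHom (-X)) = -charmatrix (-A) := by
    ext i j : 1
    by_cases hij : i = j
    · subst hij; simp; ring
    · simp [charmatrix_apply_ne _ _ _ hij]
  have hcomp : A.charpoly.comp (-X) = (-1) ^ Fintype.card m * (-A).charpoly := by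
    rw [← coe_compRingHom_apply, charpoly, RingHom.map_det, RingHom.mapMatrix_apply, h, det_neg,
      charpoly]
  rw [hcomp, ← mul_assoc, ← mul_pow, neg_one_mul, neg_neg, one_pow, one_mul]

theorem roots_charpoly_neg [IsDomain R] (A : Matrix m m R) :
    (-A).charpoly.roots = A.charpoly.roots.map Neg.neg := by
  rw [charpoly_neg, ← C_1, ← C_neg, ← C_pow,
    roots_C_mul _ (pow_ne_zero _ (neg_ne_zero.2 one_ne_zero)),
    roots_comp_neg_X]

end Matrix

namespace SimpleGraph

open Matrix Sum

variable {V : Type*} [Fintype V] [DecidableEq V] {R : Type*} [CommRing R]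
  (G : SimpleGraph V) (H : SimpleGraph (V ⊕ V)) [DecidableRel G.Adj] [DecidableRel H.Adj]

theorem charpoly_adjMatrix_of_adj_inl_inr (σ : V ≃ V)
    (hll : ∀ x y, ¬ H.Adj (inl x) (inl y)) (hrr : ∀ x y, ¬ H.Adj (inr x) (inr y))
    (hlr : ∀ x y, H.Adj (inl x) (inr y) ↔ G.Adj x (σ y)) :
    (H.adjMatrix R).charpoly = (G.adjMatrix R).charpoly * (-G.adjMatrix R).charpoly := by
  let e : V ⊕ V ≃ V ⊕ V := (Equiv.refl V).sumCongr σ.symm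
  have h : reindex e.symm e.symm (H.adjMatrix R) =
      fromBlocks 0 (G.adjMatrix R) (G.adjMatrix R) 0 := by
    ext (x | x) (y | y) <;> simp [e, hll, hrr, hlr, H.adj_comm (inr _), G.adj_comm x]
  rw [← charpoly_reindex e.symm, h, charpoly_fromBlocks_zero_self]

theorem roots_charpoly_adjMatrix_of_adj_inl_inr [IsDomain R] (σ : V ≃ V)
    (hll : ∀ x y, ¬ H.Adj (inl x) (inl y)) (hrr : ∀ x y, ¬ H.Adj (inr x) (inr y))
    (hlr : ∀ x y, H.Adj (inl x) (inr y) ↔ G.Adj x (σ y)) :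
    (H.adjMatrix R).charpoly.roots =
      (G.adjMatrix R).charpoly.roots + (G.adjMatrix R).charpoly.roots.map Neg.neg := by
  rw [G.charpoly_adjMatrix_of_adj_inl_inr H σ hll hrr hlr,
    Polynomial.roots_mul ((charpoly_monic _).mul (charpoly_monic _)).ne_zero, roots_charpoly_neg]

end SimpleGraph

namespace FareyVertex

variable {n : ℕ}

theorem exists_eq_mk (x : FareyVertex n) : ∃ a c h, x = FareyVertex.mk n a c h := by
  obtain ⟨⟨⟨a, c⟩, h⟩, rfl⟩ := Quotient.exists_rep x
  exact ⟨a, c, h, rfl⟩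

theorem exists_sign_of_mk_eq {a c b d : ZMod n} {h : IsCoprime a c} {h' : IsCoprime b d}
    (he : FareyVertex.mk n a c h = FareyVertex.mk n b d h') :
    ∃ ε : ZMod n, (ε = 1 ∨ ε = -1) ∧ a = ε * b ∧ c = ε * d := by
  rcases Quotient.exact he with he | he <;>
    simp only [Prod.ext_iff, Prod.fst_neg, Prod.snd_neg] at he
  · exact ⟨1, Or.inl rfl, by simp [he.1], by simp [he.2]⟩
  · exact ⟨-1, Or.inr rfl, by simp [he.1], by simp [he.2]⟩

def scale (u : (ZMod n)ˣ) : FareyVertex n ≃ FareyVertex n :=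
  Quotient.congr (((Units.mulLeft u).prodCongr (Equiv.refl _)).subtypeEquiv
      fun _ => (isCoprime_mul_unit_left_left u.isUnit _ _).symm)
    (by
      rintro ⟨⟨a, c⟩, _⟩ ⟨⟨b, d⟩, _⟩
      change (_ ∨ _) ↔
        ((u * a, c) = ((u * b, d) : ZMod n × ZMod n) ∨ (u * a, c) = -(u * b, d))
      simp [Prod.ext_iff, ← mul_neg])

theorem scale_mk (u : (ZMod n)ˣ) (a c : ZMod n) (h : IsCoprime a c) :
    scale u (FareyVertex.mk n a c h) =
      FareyVertex.mk n (u * a) c ((isCoprime_mul_unit_left_left u.isUnit a c).2 h) :=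
  rfl

end FareyVertex

theorem mul_eq_one_or_neg_one {R : Type*} [Ring R] {ε x : R} (hε : ε = 1 ∨ ε = -1)
    (hx : x = 1 ∨ x = -1) : ε * x = 1 ∨ ε * x = -1 := by
  rcases hε with rfl | rfl <;> rcases hx with rfl | rfl <;> simp

section

open FareyVertex Sum

variable {n : ℕ}

theorem fareyGraph_adj_mk [Nontrivial (ZMod n)] {a c b d : ZMod n} (h : IsCoprime a c)
    (h' : IsCoprime b d) :
    (FareyGraph n).Adj (mk n a c h) (mk n b d h') ↔ a * d - b * c = 1 ∨ a * d - b * c = -1 := by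
  constructor
  · rintro ⟨-, a', c', b', d', ⟨_, hx⟩, ⟨_, hy⟩, hdet⟩
    obtain ⟨ε, hε, rfl, rfl⟩ := exists_sign_of_mk_eq hx
    obtain ⟨δ, hδ, rfl, rfl⟩ := exists_sign_of_mk_eq hy
    rw [show ε * a' * (δ * d') - δ * b' * (ε * c') = ε * (δ * (a' * d' - b' * c')) by ring]
    exact mul_eq_one_or_neg_one hε (mul_eq_one_or_neg_one hδ hdet)
  · intro hdet
    refine ⟨fun he => ?_, a, c, b, d, ⟨h, rfl⟩, ⟨h', rfl⟩, hdet⟩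
    obtain ⟨ε, -, rfl, rfl⟩ := exists_sign_of_mk_eq he
    rw [show ε * b * d - b * (ε * d) = 0 by ring] at hdet
    rcases hdet with h0 | h0
    · exact zero_ne_one h0
    · exact zero_ne_one (neg_eq_zero.1 h0.symm).symm

theorem heckeGraph_adj_inl_inr_mk (t : ℤ) {a c b d : ZMod n} (h : IsCoprime a c)
    (h' : IsCoprime b d) :
    (HeckeGraph n t).Adj (inl (mk n a c h)) (inr (mk n b d h')) ↔
      a * d - t * (b * c) = 1 ∨ a * d - t * (b * c) = -1 := by
  constructor
  · rintro (⟨a', c', b', d', ⟨_, hx⟩, ⟨_, hy⟩, hdet⟩ |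
      ⟨_, _, _, _, -, ⟨_, hy⟩, -⟩)
    · obtain ⟨ε, hε, rfl, rfl⟩ := exists_sign_of_mk_eq (inl_injective hx)
      obtain ⟨δ, hδ, rfl, rfl⟩ := exists_sign_of_mk_eq (inr_injective hy)
      rw [show ε * a' * (δ * d') - t * (δ * b' * (ε * c')) =
        ε * (δ * (a' * d' - t * (b' * c'))) by ring]
      exact mul_eq_one_or_neg_one hε (mul_eq_one_or_neg_one hδ hdet)
    · exact absurd hy inl_ne_inr
  · exact fun hdet => Or.inl ⟨a, c, b, d, ⟨h, rfl⟩, ⟨h', rfl⟩, hdet⟩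

theorem heckeGraph_not_adj_inl_inl (t : ℤ) (x y : FareyVertex n) :
    ¬ (HeckeGraph n t).Adj (inl x) (inl y) := by
  rintro (⟨_, _, _, _, -, ⟨_, hy⟩, -⟩ | ⟨_, _, _, _, -, ⟨_, hy⟩, -⟩) <;>
    exact inl_ne_inr hy

theorem heckeGraph_not_adj_inr_inr (t : ℤ) (x y : FareyVertex n) :
    ¬ (HeckeGraph n t).Adj (inr x) (inr y) := by
  rintro (⟨_, _, _, _, ⟨_, hx⟩, -, -⟩ | ⟨_, _, _, _, ⟨_, hx⟩, -, -⟩) <;>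
    exact inr_ne_inl hx

theorem heckeGraph_adj_inl_inr [Nontrivial (ZMod n)] {t : ℤ} (u : (ZMod n)ˣ)
    (hu : (u : ZMod n) = t) (x y : FareyVertex n) :
    (HeckeGraph n t).Adj (inl x) (inr y) ↔ (FareyGraph n).Adj x (scale u y) := by
  obtain ⟨a, c, h, rfl⟩ := exists_eq_mk x
  obtain ⟨b, d, h', rfl⟩ := exists_eq_mk y
  rw [scale_mk, heckeGraph_adj_inl_inr_mk, fareyGraph_adj_mk, hu, mul_assoc]

theorem spHecke_eq_sp3_add_neg (hn : 1 < n) {t : ℤ} (ht : IsUnit (t : ZMod n)) :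
    spHecke n t = sp3 n + (sp3 n).map (fun lam => -lam) := by
  have : Fact (1 < n) := ⟨hn⟩
  obtain ⟨u, hu⟩ := ht
  rw [spHecke, sp3, heckeCharpoly, fareyCharpoly, dif_neg (by omega), dif_neg (by omega)]
  convert (FareyGraph n).roots_charpoly_adjMatrix_of_adj_inl_inr (HeckeGraph n t) (scale u)
    (heckeGraph_not_adj_inl_inl t) (heckeGraph_not_adj_inr_inr t) (heckeGraph_adj_inl_inr u hu)

end

/-- For every odd `n ≥ 3`, the spectrum of the Hecke graph
`G4(n) = HeckeGraph n 2` is the multiset union of `sp3(n)` and `-sp3(n)`; the same holds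
for `G6(n) = HeckeGraph n 3` whenever `n ≥ 2` is not divisible by `3`. -/
theorem stmt17 :
    (∀ n : ℕ, 3 ≤ n → Odd n →
      spHecke n 2 = sp3 n + (sp3 n).map (fun lam => -lam)) ∧
    (∀ n : ℕ, 2 ≤ n → ¬ (3 ∣ n) →
      spHecke n 3 = sp3 n + (sp3 n).map (fun lam => -lam)) := by
  refine ⟨fun n hn hodd => spHecke_eq_sp3_add_neg (by omega) ?_,
    fun n hn h3 => spHecke_eq_sp3_add_neg (by omega) ?_⟩
  · exact_mod_cast (ZMod.isUnit_iff_coprime 2 n).2 (Nat.coprime_two_left.2 hodd)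
  · exact_mod_cast (ZMod.isUnit_iff_coprime 3 n).2
      ((Nat.Prime.coprime_iff_not_dvd Nat.prime_three).2 h3)
end
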